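/- arXiv:1302.3783 — 2 statements merged into one kernel-verified Lean document; each statement's English description precedes it below -/
import Mathlib

section
/- For two words u, v over a finite alphabet, each of length at least k−1, u and v are k-Abelian equivalent if and only if |u|_x = |v|_x for all words x of length exactly k, and u and v have the same prefix of length k−1 and the same suffix of length k−1. -/
/-- Number of occurrences of `x` as a factor of `u`. -/
def occ {α : Type*} [DecidableEq α] (u x : List α) : ℕ :=
  ((List.range (u.length + 1)).filter (fun i => decide (x <+: u.drop i))).length

/-- `k`-Abelian equivalence: same number of occurrences of every word of length at most `k`. -/
def KAbEq {α : Type*} [DecidableEq α] (k : ℕ) (u v : List α) : Prop :=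
  ∀ x : List α, x.length ≤ k → occ u x = occ v x

/-- The factor of the infinite word `w` of length `n` starting at position `i`. -/
def factorAt {α : Type*} (w : ℕ → α) (i n : ℕ) : List α :=
  (List.range n).map (fun j => w (i + j))

/-- `k`-Abelian complexity: the number of `k`-Abelian classes of length-`n` factors of `w`. -/
noncomputable def rho {α : Type*} [DecidableEq α] (k : ℕ) (w : ℕ → α) (n : ℕ) : ℕ :=
  Set.ncard { C : Set (List α) | ∃ i : ℕ,
    C = { v | (∃ j : ℕ, v = factorAt w j n) ∧ KAbEq k v (factorAt w i n) } }

/-!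
Counting the occurrences of `x` in `u` by the letter that follows them gives
`|u|_x = ∑ₐ |u|_{xa} + [x is a suffix of u]`; counting them by the letter that precedes them gives
`|u|_x = ∑ₐ |u|_{ax} + [x is a prefix of u]`. Hence, once the counts of all words of length `k`
agree, the counts of all shorter words agree exactly when their suffix indicators do (downward
induction on `|x|`), and `k`-Abelian equivalence forces the prefix and suffix indicators of all
words of length `< k` to agree. Knowing which words of length `≤ k - 1` are prefixes (suffixes)
of a word is the same as knowing its prefix (suffix) of length `k - 1`.
-/

namespace List

variable {α : Type*} {u v : List α} {m : ℕ}

theorem take_eq_take_iff_forall_prefix_iff :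
    u.take m = v.take m ↔ ∀ x : List α, x.length ≤ m → (x <+: u ↔ x <+: v) := by
  constructor
  · intro h x hx
    simpa [prefix_take_iff, hx] using congrArg (x <+: ·) h
  · intro h
    have huv : u.take m <+: v.take m :=
      prefix_take_iff.2 ⟨(h _ (u.length_take_le m)).1 (u.take_prefix m), u.length_take_le m⟩
    have hvu : v.take m <+: u.take m :=
      prefix_take_iff.2 ⟨(h _ (v.length_take_le m)).2 (v.take_prefix m), v.length_take_le m⟩
    exact huv.eq_of_length (le_antisymm huv.length_le hvu.length_le)

theorem drop_eq_drop_iff_forall_suffix_iff :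
    u.drop (u.length - m) = v.drop (v.length - m) ↔
      ∀ x : List α, x.length ≤ m → (x <:+ u ↔ x <:+ v) := by
  rw [← reverse_inj, ← take_reverse, ← take_reverse, take_eq_take_iff_forall_prefix_iff,
    reverse_involutive.surjective.forall]
  simp only [length_reverse, reverse_prefix]

end List

theorem iff_of_ite_one_zero_eq {p q : Prop} [Decidable p] [Decidable q]
    (h : (if p then 1 else 0 : ℕ) = if q then 1 else 0) : p ↔ q := by
  split_ifs at h <;> simp_all

section Occurrences

variable {α : Type*} [DecidableEq α]

theorem occ_nil (x : List α) : occ [] x = if x = [] then 1 else 0 := by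
  simp only [occ, List.length_nil, zero_add, List.range_one, List.filter_cons, List.drop_zero,
    List.prefix_nil, decide_eq_true_eq, List.filter_nil]
  split <;> rfl

theorem occ_cons (b : α) (u x : List α) :
    occ (b :: u) x = (if x <+: b :: u then 1 else 0) + occ u x := by
  simp only [occ, List.length_cons, List.range_succ_eq_map (n := u.length + 1), List.filter_cons,
    List.filter_map, List.drop_zero]
  split <;> simp_all [Function.comp_def, add_comm]

theorem ite_suffix_cons (b : α) (u x : List α) :
    (if x <:+ b :: u then 1 else 0) =
      (if x = b :: u then 1 else 0) + if x <:+ u then 1 else 0 := by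
  by_cases hx : x = b :: u
  · subst hx
    have : ¬ b :: u <:+ u := fun h => by simpa using h.length_le
    simp [this]
  · simp [List.suffix_cons_iff, hx]

variable [Fintype α]

theorem sum_ite_append_singleton_prefix_add_ite_eq (x w : List α) :
    (∑ a : α, if x ++ [a] <+: w then 1 else 0) + (if x = w then 1 else 0) =
      if x <+: w then 1 else 0 := by
  induction x generalizing w with
  | nil => cases w <;> simp
  | cons c x ih =>
    cases w with
    | nil => simp
    | cons d w =>
      by_cases hcd : c = d
      · subst hcd
        simpa using ih w
      · simp [hcd]

theorem occ_eq_sum_occ_cons (u x : List α) :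
    occ u x = (∑ a : α, occ u (a :: x)) + if x <+: u then 1 else 0 := by
  induction u with
  | nil => simp [occ_nil]
  | cons b u ih =>
    simp only [occ_cons, Finset.sum_add_distrib, List.cons_prefix_cons, ite_and,
      Finset.sum_ite_eq', Finset.mem_univ, if_true]
    rw [ih]
    ring

theorem occ_eq_sum_occ_append_singleton (u x : List α) :
    occ u x = (∑ a : α, occ u (x ++ [a])) + if x <:+ u then 1 else 0 := by
  induction u with
  | nil => cases x <;> simp [occ_nil]
  | cons b u ih =>
    rw [occ_cons, ih, ite_suffix_cons, ← sum_ite_append_singleton_prefix_add_ite_eq x (b :: u)]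
    simp only [occ_cons, Finset.sum_add_distrib]
    ring

variable {u v x : List α} {m k : ℕ}

theorem KAbEq.prefix_iff (h : KAbEq (m + 1) u v) (hx : x.length ≤ m) : x <+: u ↔ x <+: v := by
  have hu := occ_eq_sum_occ_cons u x
  rw [h x (by omega), Finset.sum_congr rfl fun a _ => h (a :: x) (by simp [hx])] at hu
  exact iff_of_ite_one_zero_eq (Nat.add_left_cancel (hu.symm.trans (occ_eq_sum_occ_cons v x)))

theorem KAbEq.suffix_iff (h : KAbEq (m + 1) u v) (hx : x.length ≤ m) : x <:+ u ↔ x <:+ v := by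
  have hu := occ_eq_sum_occ_append_singleton u x
  rw [h x (by omega), Finset.sum_congr rfl fun a _ => h (x ++ [a]) (by simp [hx])] at hu
  exact iff_of_ite_one_zero_eq
    (Nat.add_left_cancel (hu.symm.trans (occ_eq_sum_occ_append_singleton v x)))

theorem kAbEq_of_occ_eq_of_suffix_iff (hk : ∀ x : List α, x.length = k → occ u x = occ v x)
    (hsuf : ∀ x : List α, x.length < k → (x <:+ u ↔ x <:+ v)) : KAbEq k u v := by
  suffices ∀ j x, x.length + j = k → occ u x = occ v x from
    fun x hx => this (k - x.length) x (by omega)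
  intro j
  induction j with
  | zero => exact hk
  | succ j ih =>
    intro x hx
    rw [occ_eq_sum_occ_append_singleton u x, occ_eq_sum_occ_append_singleton v x,
      Finset.sum_congr rfl fun a _ =>
        ih (x ++ [a]) (by rw [List.length_append, List.length_singleton]; omega),
      if_congr (hsuf x (by omega)) rfl rfl]

end Occurrences

theorem stmt4_general {α : Type*} [Fintype α] [DecidableEq α] (k : ℕ) (u v : List α) :
    KAbEq k u v ↔
      (∀ x : List α, x.length = k → occ u x = occ v x) ∧
      u.take (k - 1) = v.take (k - 1) ∧
      u.drop (u.length - (k - 1)) = v.drop (v.length - (k - 1)) := by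
  cases k with
  | zero => simp [KAbEq]
  | succ m =>
    simp only [Nat.add_sub_cancel, List.take_eq_take_iff_forall_prefix_iff,
      List.drop_eq_drop_iff_forall_suffix_iff]
    exact ⟨fun h => ⟨fun x hx => h x hx.le, fun _ => h.prefix_iff, fun _ => h.suffix_iff⟩,
      fun ⟨hk, _, hsuf⟩ => kAbEq_of_occ_eq_of_suffix_iff hk fun x hx => hsuf x (by omega)⟩

theorem stmt4 {α : Type*} [Fintype α] [DecidableEq α] (k : ℕ) (u v : List α)
    (hu : k - 1 ≤ u.length) (hv : k - 1 ≤ v.length) :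
    KAbEq k u v ↔
      (∀ x : List α, x.length = k → occ u x = occ v x) ∧
      u.take (k - 1) = v.take (k - 1) ∧
      u.drop (u.length - (k - 1)) = v.drop (v.length - (k - 1)) :=
  stmt4_general k u v
end

section
/- Let T be the Thue–Morse word, S the period-doubling word. Then for all n ≥ 2, ρ^{(1)}_S(n−1) ≤ ρ^{(2)}_T(n) ≤ 4·ρ^{(1)}_S(n−1), where ρ^{(2)}_T(n) is the number of 2-Abelian equivalence classes of length-n factors of T. -/
/-!
The period-doubling word is the difference word of Thue–Morse: `S k = true` exactly when
`T k = T (k + 1)`. Hence the numbers of `false`s and of `true`s in the factor of `S` of length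
`n - 1` at position `p` are the numbers of pairs `01, 10` and of pairs `00, 11` in the factor of
`T` of length `n` at `p`, so 2-abelian equivalence of factors of `T` implies abelian equivalence
of the corresponding factors of `S`; this gives the lower bound.

Conversely, the 2-abelian class of a factor of `T` is determined by the abelian class of the
corresponding factor of `S` and two bits: its first letter and the parity of its number of
`true`s. Indeed, as `T` is a concatenation of the blocks `01` and `10`, the number of `true`s in a
factor of given length and first letter takes at most two consecutive values.
-/

open Finset Function

section Factors

variable {α : Type*}

theorem length_factorAt (w : ℕ → α) (j n : ℕ) : (factorAt w j n).length = n := by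
  simp [factorAt]

theorem drop_factorAt (w : ℕ → α) (j n i : ℕ) :
    (factorAt w j n).drop i = factorAt w (j + i) (n - i) := by
  apply List.ext_getElem
  · simp [factorAt]
  · intro k _ _
    simp only [factorAt, List.getElem_drop, List.getElem_map, List.getElem_range, Nat.add_assoc]

theorem take_factorAt (w : ℕ → α) (j n i : ℕ) :
    (factorAt w j n).take i = factorAt w j (min i n) := by
  apply List.ext_getElem
  · simp [factorAt]
  · intro k _ _
    simp [factorAt]

theorem prefix_factorAt_iff (x : List α) (w : ℕ → α) (j n : ℕ) :
    x <+: factorAt w j n ↔ x.length ≤ n ∧ factorAt w j x.length = x := by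
  rw [List.prefix_iff_eq_take, take_factorAt]
  constructor
  · intro h
    have hl : x.length ≤ n := by simpa [length_factorAt] using congrArg List.length h
    rw [min_eq_left hl] at h
    exact ⟨hl, h.symm⟩
  · rintro ⟨hl, h⟩
    rw [min_eq_left hl, h]

variable [DecidableEq α]

theorem occ_eq_card (u x : List α) :
    occ u x = #{i ∈ range (u.length + 1) | x <+: u.drop i} :=
  rfl

theorem occ_nil_s11 (u : List α) : occ u [] = u.length + 1 := by
  simp [occ_eq_card]

theorem occ_factorAt (w : ℕ → α) (j n : ℕ) (x : List α) :
    occ (factorAt w j n) x =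
      #{i ∈ range (n + 1 - x.length) | factorAt w (j + i) x.length = x} := by
  rw [occ_eq_card, length_factorAt]
  congr 1
  ext i
  simp only [mem_filter, mem_range, drop_factorAt, prefix_factorAt_iff]
  constructor
  · rintro ⟨_, hl, h⟩
    exact ⟨by omega, h⟩
  · rintro ⟨hi, h⟩
    exact ⟨by omega, by omega, h⟩

end Factors

section Counts

variable {α : Type*} [DecidableEq α]

def letterCount (w : ℕ → α) (j n : ℕ) (a : α) : ℕ :=
  #{i ∈ range n | w (j + i) = a}

def pairCount (w : ℕ → α) (j n : ℕ) (a c : α) : ℕ :=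
  #{i ∈ range n | w (j + i) = a ∧ w (j + i + 1) = c}

theorem letterCount_add (w : ℕ → α) (j m n : ℕ) (a : α) :
    letterCount w j (m + n) a = letterCount w j m a + letterCount w (j + m) n a := by
  simp only [letterCount, card_filter, sum_range_add, Nat.add_assoc]

theorem letterCount_succ (w : ℕ → α) (j n : ℕ) (a : α) :
    letterCount w j (n + 1) a = letterCount w j n a + if w (j + n) = a then 1 else 0 := by
  simp only [letterCount, card_filter, sum_range_succ]

theorem letterCount_succ' (w : ℕ → α) (j n : ℕ) (a : α) :
    letterCount w j (n + 1) a = (if w j = a then 1 else 0) + letterCount w (j + 1) n a := by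
  rw [add_comm n, letterCount_add]
  simp [letterCount, range_one, filter_singleton, apply_ite card]

theorem occ_factorAt_singleton (w : ℕ → α) (j n : ℕ) (a : α) :
    occ (factorAt w j n) [a] = letterCount w j n a := by
  rw [occ_factorAt, letterCount]
  simp [factorAt, eq_comm]

theorem occ_factorAt_pair (w : ℕ → α) (j n : ℕ) (a c : α) :
    occ (factorAt w j (n + 1)) [a, c] = pairCount w j n a c := by
  rw [occ_factorAt, pairCount]
  simp [factorAt, List.range_succ, Nat.add_assoc, eq_comm]

theorem kabEq_one_factorAt {w w' : ℕ → α} {p q n : ℕ}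
    (h : ∀ a, letterCount w p n a = letterCount w' q n a) :
    KAbEq 1 (factorAt w p n) (factorAt w' q n) := by
  rintro (_ | ⟨a, _ | ⟨_, _⟩⟩) hx
  · simp [occ_nil_s11, length_factorAt]
  · simp only [occ_factorAt_singleton, h]
  · simp at hx

theorem kabEq_two_factorAt {w w' : ℕ → α} {p q n : ℕ}
    (h₁ : ∀ a, letterCount w p (n + 1) a = letterCount w' q (n + 1) a)
    (h₂ : ∀ a c, pairCount w p n a c = pairCount w' q n a c) :
    KAbEq 2 (factorAt w p (n + 1)) (factorAt w' q (n + 1)) := by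
  rintro (_ | ⟨a, _ | ⟨c, _ | ⟨_, _⟩⟩⟩) hx
  · simp [occ_nil_s11, length_factorAt]
  · simp only [occ_factorAt_singleton, h₁]
  · simp only [occ_factorAt_pair, h₂]
  · simp at hx

end Counts

section Binary

variable (w : ℕ → Bool) (j n : ℕ)

theorem letterCount_false_add_letterCount_true :
    letterCount w j n false + letterCount w j n true = n := by
  simp only [letterCount, Bool.eq_false_iff]
  rw [add_comm, card_filter_add_card_filter_not, card_range]

theorem pairCount_first_add (a : Bool) :
    pairCount w j n a false + pairCount w j n a true = letterCount w j n a := by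
  simp only [pairCount, letterCount, card_filter, ← sum_add_distrib]
  refine sum_congr rfl fun i _ => ?_
  cases w (j + i) <;> cases w (j + i + 1) <;> cases a <;> rfl

theorem pairCount_second_add (c : Bool) :
    pairCount w j n false c + pairCount w j n true c = letterCount w (j + 1) n c := by
  simp only [pairCount, letterCount, card_filter, ← sum_add_distrib, Nat.add_right_comm j 1]
  refine sum_congr rfl fun i _ => ?_
  cases w (j + i) <;> cases w (j + i + 1) <;> cases c <;> rfl

def eqSucc (k : ℕ) : Bool :=
  w k == w (k + 1)

theorem letterCount_eqSucc (b : Bool) :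
    letterCount (eqSucc w) j n b = pairCount w j n false (!b) + pairCount w j n true b := by
  simp only [pairCount, letterCount, card_filter, ← sum_add_distrib]
  refine sum_congr rfl fun i _ => ?_
  rcases Bool.eq_false_or_eq_true (w (j + i)) with h | h <;>
    rcases Bool.eq_false_or_eq_true (w (j + i + 1)) with h' | h' <;> cases b <;>
    simp [eqSucc, h, h']

theorem eq_iff_even_letterCount_eqSucc_false :
    w (j + n) = w j ↔ Even (letterCount (eqSucc w) j n false) := by
  induction n with
  | zero => simp [letterCount]
  | succ n ih =>
    rw [letterCount_succ, Nat.even_add, ← ih, eqSucc, ← Nat.add_assoc]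
    cases w j <;> cases w (j + n) <;> cases w (j + n + 1) <;> decide

end Binary

section TwoAbelian

variable {w : ℕ → Bool} {p q n : ℕ}

theorem kabEq_one_eqSucc_of_kabEq_two
    (h : KAbEq 2 (factorAt w p (n + 1)) (factorAt w q (n + 1))) :
    KAbEq 1 (factorAt (eqSucc w) p n) (factorAt (eqSucc w) q n) := by
  have hpair (a c : Bool) : pairCount w p n a c = pairCount w q n a c := by
    rw [← occ_factorAt_pair, ← occ_factorAt_pair]
    exact h [a, c] le_rfl
  exact kabEq_one_factorAt fun b => by simp only [letterCount_eqSucc, hpair]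

/-- The four pair counts of a binary word are determined by its length, its numbers of letter
changes and of `true`s, and its first and last letters; the last letter is fixed by the first one
and the parity of the number of changes. -/
theorem kabEq_two_of_kabEq_one_eqSucc
    (h : KAbEq 1 (factorAt (eqSucc w) p n) (factorAt (eqSucc w) q n)) (hfirst : w p = w q)
    (htrue : letterCount w p (n + 1) true = letterCount w q (n + 1) true) :
    KAbEq 2 (factorAt w p (n + 1)) (factorAt w q (n + 1)) := by
  have hchanges : letterCount (eqSucc w) p n false = letterCount (eqSucc w) q n false := by
    rw [← occ_factorAt_singleton, ← occ_factorAt_singleton]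
    exact h [false] le_rfl
  have hlast : w (p + n) = w (q + n) := by
    have hp := eq_iff_even_letterCount_eqSucc_false w p n
    have hq := eq_iff_even_letterCount_eqSucc_false w q n
    rw [← hchanges, ← hp, ← hfirst] at hq
    revert hq
    cases w p <;> cases w (p + n) <;> cases w (q + n) <;> decide
  have counts (r : ℕ) :
      pairCount w r n false false + pairCount w r n false true = letterCount w r n false ∧
      pairCount w r n true false + pairCount w r n true true = letterCount w r n true ∧
      pairCount w r n false true + pairCount w r n true true = letterCount w (r + 1) n true ∧
      letterCount (eqSucc w) r n false = pairCount w r n false true + pairCount w r n true false ∧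
      letterCount w r n false + letterCount w r n true = n ∧
      letterCount w r (n + 1) true =
        letterCount w r n true + (if w (r + n) = true then 1 else 0) ∧
      letterCount w r (n + 1) true = (if w r = true then 1 else 0) + letterCount w (r + 1) n true :=
    ⟨pairCount_first_add w r n false, pairCount_first_add w r n true,
      pairCount_second_add w r n true, letterCount_eqSucc w r n false,
      letterCount_false_add_letterCount_true w r n, letterCount_succ w r n true,
      letterCount_succ' w r n true⟩
  obtain ⟨p₁, p₂, p₃, p₄, p₅, p₆, p₇⟩ := counts p
  obtain ⟨q₁, q₂, q₃, q₄, q₅, q₆, q₇⟩ := counts q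
  rw [hfirst] at p₇
  rw [hlast] at p₆
  refine kabEq_two_factorAt (fun a => ?_) (fun a c => ?_)
  · have hp := letterCount_false_add_letterCount_true w p (n + 1)
    have hq := letterCount_false_add_letterCount_true w q (n + 1)
    cases a <;> omega
  · cases a <;> cases c <;> omega

end TwoAbelian

theorem eq_eqSucc_of_thueMorse {T S : ℕ → Bool}
    (hTe : ∀ n, T (2 * n) = T n) (hTo : ∀ n, T (2 * n + 1) = !T n)
    (hS0 : ∀ n, S (2 * n) = false) (hS1 : ∀ n, S (2 * n + 1) = !S n) : S = eqSucc T := by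
  funext k
  induction k using Nat.strong_induction_on with
  | _ k ih =>
    obtain ⟨m, rfl | rfl⟩ := Nat.even_or_odd' k
    · rw [hS0, eqSucc, hTo, hTe]
      cases T m <;> rfl
    · rw [hS1, ih m (by omega), eqSucc, eqSucc, hTo, show 2 * m + 1 + 1 = 2 * (m + 1) by ring, hTe]
      cases T m <;> cases T (m + 1) <;> rfl

section BlockWord

variable {w : ℕ → Bool}

theorem letterCount_zero_two_mul (hw : ∀ k, w (2 * k + 1) = !w (2 * k)) (k : ℕ) :
    letterCount w 0 (2 * k) true = k := by
  induction k with
  | zero => rfl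
  | succ k ih =>
    rw [Nat.mul_succ, letterCount_succ, letterCount_succ, ih, Nat.zero_add, Nat.zero_add, hw]
    cases w (2 * k) <;> rfl

/-- Writing `w` as a concatenation of blocks `01` and `10`, the prefix of length `m` has either
exactly `m / 2` letters `true`, or it ends in the middle of a block whose second letter is `w m`. -/
theorem two_mul_letterCount_zero (hw : ∀ k, w (2 * k + 1) = !w (2 * k)) (m : ℕ) :
    2 * letterCount w 0 m true = m ∨
      2 * letterCount w 0 m true + 2 * (if w m = true then 1 else 0) = m + 1 := by
  obtain ⟨k, rfl | rfl⟩ := Nat.even_or_odd' m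
  · exact .inl (by rw [letterCount_zero_two_mul hw])
  · right
    rw [letterCount_succ, letterCount_zero_two_mul hw, Nat.zero_add, hw]
    cases w (2 * k) <;>
      simp only [Bool.not_false, Bool.not_true, Bool.false_eq_true, if_true, if_false] <;> omega

theorem letterCount_true_le_of_eq (hw : ∀ k, w (2 * k + 1) = !w (2 * k)) {p q : ℕ}
    (hpq : w p = w q) (n : ℕ) :
    letterCount w p n true ≤ letterCount w q n true + 1 := by
  -- Over `ℤ`, `e m := 2 * letterCount w 0 m true - m` lies in `{0, 1 - 2 [w m]}`, so
  -- `e q - e p ≤ 1`, and twice the difference of the two counts is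
  -- `e (p + n) - e (q + n) + e q - e p ≤ 3`.
  have hp := letterCount_add w 0 p n true
  have hq := letterCount_add w 0 q n true
  have := two_mul_letterCount_zero hw p
  have := two_mul_letterCount_zero hw q
  have := two_mul_letterCount_zero hw (p + n)
  have := two_mul_letterCount_zero hw (q + n)
  rw [hpq] at *
  simp only [Nat.zero_add] at *
  split_ifs at * <;> omega

theorem letterCount_true_eq_of_modEq (hw : ∀ k, w (2 * k + 1) = !w (2 * k)) {p q : ℕ}
    (hpq : w p = w q) (n : ℕ) (h : letterCount w p n true ≡ letterCount w q n true [MOD 2]) :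
    letterCount w p n true = letterCount w q n true := by
  have := letterCount_true_le_of_eq hw hpq n
  have := letterCount_true_le_of_eq hw hpq.symm n
  unfold Nat.ModEq at h
  omega

end BlockWord

section Classes

variable {α : Type*} [DecidableEq α]

def factorClass (k : ℕ) (w : ℕ → α) (n i : ℕ) : Set (List α) :=
  { v | (∃ j : ℕ, v = factorAt w j n) ∧ KAbEq k v (factorAt w i n) }

theorem rho_eq_ncard_range_factorClass (k : ℕ) (w : ℕ → α) (n : ℕ) :
    rho k w n = (Set.range (factorClass k w n)).ncard := by
  simp only [rho, Set.range, factorClass, eq_comm]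

theorem factorClass_eq_factorClass_iff {k : ℕ} {w : ℕ → α} {n i i' : ℕ} :
    factorClass k w n i = factorClass k w n i' ↔ KAbEq k (factorAt w i n) (factorAt w i' n) := by
  constructor
  · intro h
    have hi : factorAt w i n ∈ factorClass k w n i := ⟨⟨i, rfl⟩, fun _ _ => rfl⟩
    exact (h ▸ hi).2
  · intro h
    ext v
    exact and_congr_right fun _ =>
      ⟨fun hv x hx => (hv x hx).trans (h x hx), fun hv x hx => (hv x hx).trans (h x hx).symm⟩

theorem finite_range_factorClass [Finite α] (k : ℕ) (w : ℕ → α) (n : ℕ) :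
    (Set.range (factorClass k w n)).Finite := by
  refine ((List.finite_length_eq α n).image
    fun u => { v | (∃ j : ℕ, v = factorAt w j n) ∧ KAbEq k v u }).subset ?_
  rintro _ ⟨i, rfl⟩
  exact ⟨factorAt w i n, length_factorAt w i n, rfl⟩

end Classes

theorem ncard_range_le_of_factorsThrough {ι α β : Type*} {f : ι → α} {g : ι → β}
    (hfg : f.FactorsThrough g) (hg : (Set.range g).Finite) :
    (Set.range f).ncard ≤ (Set.range g).ncard := by
  rcases isEmpty_or_nonempty ι with hι | ⟨⟨i⟩⟩
  · simp [Set.range_eq_empty]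
  · rw [← hfg.extend_comp (fun _ => f i), Set.range_comp]
    exact Set.ncard_image_le hg

theorem ncard_range_le_mul_card_of_factorsThrough {ι α β γ : Type*} [Finite γ] {f : ι → α}
    {g : ι → β} {c : ι → γ} (hfg : f.FactorsThrough fun i => (g i, c i))
    (hg : (Set.range g).Finite) :
    (Set.range f).ncard ≤ (Set.range g).ncard * Nat.card γ := by
  have hsub : Set.range (fun i => (g i, c i)) ⊆ Set.range g ×ˢ Set.univ := by
    rintro _ ⟨i, rfl⟩
    exact ⟨⟨i, rfl⟩, trivial⟩
  calc (Set.range f).ncard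
      ≤ (Set.range fun i => (g i, c i)).ncard :=
        ncard_range_le_of_factorsThrough hfg ((hg.prod Set.finite_univ).subset hsub)
    _ ≤ (Set.range g ×ˢ (Set.univ : Set γ)).ncard :=
        Set.ncard_le_ncard hsub (hg.prod Set.finite_univ)
    _ = (Set.range g).ncard * Nat.card γ := by rw [Set.ncard_prod, Set.ncard_univ]

theorem stmt11_general (T S : ℕ → Bool)
    (hTe : ∀ n, T (2 * n) = T n) (hTo : ∀ n, T (2 * n + 1) = !T n)
    (hS0 : ∀ n, S (2 * n) = false) (hS1 : ∀ n, S (2 * n + 1) = !S n)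
    (n : ℕ) (hn : 2 ≤ n) :
    rho 1 S (n - 1) ≤ rho 2 T n ∧ rho 2 T n ≤ 4 * rho 1 S (n - 1) := by
  obtain ⟨n, rfl⟩ : ∃ m, n = m + 1 := ⟨n - 1, by omega⟩
  obtain rfl := eq_eqSucc_of_thueMorse hTe hTo hS0 hS1
  have hblocks (k : ℕ) : T (2 * k + 1) = !T (2 * k) := by rw [hTo, hTe]
  simp only [Nat.add_sub_cancel, rho_eq_ncard_range_factorClass]
  constructor
  · refine ncard_range_le_of_factorsThrough (fun p q h => ?_) (finite_range_factorClass _ _ _)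
    rw [factorClass_eq_factorClass_iff] at h ⊢
    exact kabEq_one_eqSucc_of_kabEq_two h
  · calc _ ≤ (Set.range (factorClass 1 (eqSucc T) n)).ncard * Nat.card (Bool × ZMod 2) :=
          ncard_range_le_mul_card_of_factorsThrough
            (c := fun p => (T p, (letterCount T p (n + 1) true : ZMod 2)))
            (fun p q h => ?_) (finite_range_factorClass _ _ _)
      _ = 4 * (Set.range (factorClass 1 (eqSucc T) n)).ncard := by simp [mul_comm]
    simp only [Prod.mk.injEq, factorClass_eq_factorClass_iff, ZMod.natCast_eq_natCast_iff] at h ⊢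
    obtain ⟨hS, hfirst, hparity⟩ := h
    exact kabEq_two_of_kabEq_one_eqSucc hS hfirst
      (letterCount_true_eq_of_modEq hblocks hfirst _ hparity)

theorem stmt11 (T S : ℕ → Bool)
    (hT0 : T 0 = false) (hTe : ∀ n, T (2 * n) = T n) (hTo : ∀ n, T (2 * n + 1) = !T n)
    (hS0 : ∀ n, S (2 * n) = false) (hS1 : ∀ n, S (2 * n + 1) = !S n)
    (n : ℕ) (hn : 2 ≤ n) :
    rho 1 S (n - 1) ≤ rho 2 T n ∧ rho 2 T n ≤ 4 * rho 1 S (n - 1) :=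
  stmt11_general T S hTe hTo hS0 hS1 n hn
end
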